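/- In a finite capacitated bipartite assignment instance, every feasible item set is contained in a feasible item set of maximum cardinality (i.e., any feasible set can be extended, without removing any of its elements, to a feasible set whose cardinality equals the maximum cardinality over all feasible sets). -/

import Mathlib

set_option maxHeartbeats 1000000
set_option linter.unusedSectionVars false

open Finset

/-- A set `S` of items is feasible (matchable) in the capacitated bipartite
assignment instance given by capacities `cap : ε → ℕ` and adjacency
`Adj : ι → ε → Prop` if there is an assignment `φ` sending each item of `S`
to an adjacent effect, with each effect `e` receiving at most `cap e` items. -/
def Feasible {ι ε : Type*} [DecidableEq ε] (cap : ε → ℕ) (Adj : ι → ε → Prop)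
    (S : Finset ι) : Prop :=
  ∃ φ : ι → ε, (∀ x ∈ S, Adj x (φ x)) ∧
    ∀ e : ε, (S.filter (fun x => φ x = e)).card ≤ cap e

section Aux

variable {ι ε : Type*} [Fintype ι] [Fintype ε] [DecidableEq ι] [DecidableEq ε]
  (cap : ε → ℕ) (Adj : ι → ε → Prop)

open scoped Classical

/-- neighborhood of a set of items -/
noncomputable def nbr (D : Finset ι) : Finset ε :=
  univ.filter (fun e => ∃ x ∈ D, Adj x e)

/-- total capacity of the neighborhood -/
noncomputable def fcap (D : Finset ι) : ℕ := ∑ e ∈ nbr Adj D, cap e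

/-- capacitated Hall condition -/
def HallC (S : Finset ι) : Prop := ∀ D ⊆ S, D.card ≤ fcap cap Adj D

variable {cap Adj}

lemma nbr_mono {A B : Finset ι} (h : A ⊆ B) : nbr Adj A ⊆ nbr Adj B := by
  intro e he
  simp only [nbr, mem_filter, mem_univ, true_and] at he ⊢
  obtain ⟨x, hx, hxe⟩ := he
  exact ⟨x, h hx, hxe⟩

lemma nbr_union (A B : Finset ι) : nbr Adj (A ∪ B) = nbr Adj A ∪ nbr Adj B := by
  ext e
  simp only [nbr, mem_filter, mem_univ, true_and, mem_union]
  constructor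
  · rintro ⟨x, hx | hx, hxe⟩
    · exact Or.inl ⟨x, hx, hxe⟩
    · exact Or.inr ⟨x, hx, hxe⟩
  · rintro (⟨x, hx, hxe⟩ | ⟨x, hx, hxe⟩)
    · exact ⟨x, Or.inl hx, hxe⟩
    · exact ⟨x, Or.inr hx, hxe⟩

lemma fcap_mono {A B : Finset ι} (h : A ⊆ B) : fcap cap Adj A ≤ fcap cap Adj B :=
  Finset.sum_le_sum_of_subset (nbr_mono h)

lemma sum_union_inter (P Q : Finset ε) :
    (∑ e ∈ P ∪ Q, cap e) + ∑ e ∈ P ∩ Q, cap e = (∑ e ∈ P, cap e) + ∑ e ∈ Q, cap e := by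
  have h1 : P ∪ Q = P ∪ (Q \ P) := by rw [union_sdiff_self_eq_union]
  have h2 : (∑ e ∈ P ∪ Q, cap e) = (∑ e ∈ P, cap e) + ∑ e ∈ Q \ P, cap e := by
    rw [h1, Finset.sum_union (disjoint_sdiff)]
  have h3 : (∑ e ∈ Q, cap e) = (∑ e ∈ P ∩ Q, cap e) + ∑ e ∈ Q \ P, cap e := by
    rw [← Finset.sum_union]
    · congr 1
      ext e; simp only [mem_union, mem_inter, mem_sdiff]; tauto
    · exact Finset.disjoint_left.2 (fun e he he' => (mem_sdiff.1 he').2 (mem_inter.1 he).1)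
  omega

lemma fcap_submodular (A B : Finset ι) :
    fcap cap Adj (A ∪ B) + fcap cap Adj (A ∩ B) ≤ fcap cap Adj A + fcap cap Adj B := by
  have key := sum_union_inter (cap := cap) (nbr Adj A) (nbr Adj B)
  have h1 : fcap cap Adj (A ∪ B) = ∑ e ∈ nbr Adj A ∪ nbr Adj B, cap e := by
    rw [fcap, nbr_union]
  have h2 : fcap cap Adj (A ∩ B) ≤ ∑ e ∈ nbr Adj A ∩ nbr Adj B, cap e := by
    apply Finset.sum_le_sum_of_subset
    intro e he
    exact mem_inter.2 ⟨nbr_mono inter_subset_left he, nbr_mono inter_subset_right he⟩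
  calc fcap cap Adj (A ∪ B) + fcap cap Adj (A ∩ B)
      ≤ (∑ e ∈ nbr Adj A ∪ nbr Adj B, cap e) + ∑ e ∈ nbr Adj A ∩ nbr Adj B, cap e := by
        rw [h1]; omega
    _ = fcap cap Adj A + fcap cap Adj B := key

/-- Feasible implies Hall condition. -/
lemma feasible_hall {S : Finset ι} (h : Feasible cap Adj S) : HallC cap Adj S := by
  obtain ⟨φ, hadj, hcnt⟩ := h
  intro D hD
  have hDcard : D.card = ∑ e ∈ nbr Adj D, (D.filter (fun x => φ x = e)).card := by
    rw [← Finset.card_biUnion]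
    · congr 1
      ext x
      simp only [mem_biUnion, mem_filter]
      constructor
      · intro hx
        refine ⟨φ x, ?_, hx, rfl⟩
        simp only [nbr, mem_filter, mem_univ, true_and]
        exact ⟨x, hx, hadj x (hD hx)⟩
      · rintro ⟨e, _, hx, _⟩; exact hx
    · intro a _ b _ hab
      apply Finset.disjoint_left.2
      intro x hx hx'
      exact hab ((Finset.mem_filter.1 hx).2.symm.trans (Finset.mem_filter.1 hx').2)
  rw [hDcard]
  apply Finset.sum_le_sum
  intro e _
  calc (D.filter (fun x => φ x = e)).card ≤ (S.filter (fun x => φ x = e)).card :=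
        Finset.card_le_card (Finset.filter_subset_filter _ hD)
    _ ≤ cap e := hcnt e

/-- Hall condition implies feasible (given some default function `ι → ε`). -/
lemma hall_feasible {S : Finset ι} (h : HallC cap Adj S) (φ₀ : ι → ε) :
    Feasible cap Adj S := by
  set t : {x // x ∈ S} → Finset (ε × ℕ) :=
    fun x => (univ.filter (fun e => Adj x.1 e)).biUnion
      (fun e => ({e} : Finset ε) ×ˢ Finset.range (cap e)) with ht
  have hall : ∀ s : Finset {x // x ∈ S}, s.card ≤ (s.biUnion t).card := by
    intro s
    set D : Finset ι := s.image (fun x => x.1) with hDdef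
    have hDcard : D.card = s.card := Finset.card_image_of_injective _ Subtype.val_injective
    have hDS : D ⊆ S := by
      intro x hx
      obtain ⟨y, _, rfl⟩ := Finset.mem_image.1 hx
      exact y.2
    have hsub : s.biUnion t = (nbr Adj D).biUnion
        (fun e => ({e} : Finset ε) ×ˢ Finset.range (cap e)) := by
      ext p
      simp only [mem_biUnion, ht, mem_filter, mem_univ, true_and, nbr, hDdef, mem_image]
      constructor
      · rintro ⟨x, hx, e, hadj, hp⟩
        exact ⟨e, ⟨x.1, ⟨x, hx, rfl⟩, hadj⟩, hp⟩
      · rintro ⟨e, ⟨x, ⟨y, hy, rfl⟩, hadj⟩, hp⟩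
        exact ⟨y, hy, e, hadj, hp⟩
    have hcard : ((nbr Adj D).biUnion
        (fun e => ({e} : Finset ε) ×ˢ Finset.range (cap e))).card = fcap cap Adj D := by
      rw [Finset.card_biUnion]
      · apply Finset.sum_congr rfl
        intro e _
        rw [Finset.card_product, Finset.card_singleton, Finset.card_range, one_mul]
      · intro a _ b _ hab
        apply Finset.disjoint_left.2
        rintro ⟨e, n⟩ hea heb
        simp only [Finset.mem_product, Finset.mem_singleton] at hea heb
        exact hab (hea.1.symm.trans heb.1)
    rw [hsub, hcard, ← hDcard]
    exact h D hDS
  obtain ⟨f, hfinj, hft⟩ := (Finset.all_card_le_biUnion_card_iff_exists_injective t).1 hall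
  refine ⟨fun x => if hx : x ∈ S then (f ⟨x, hx⟩).1 else φ₀ x, ?_, ?_⟩
  · intro x hx
    simp only [dif_pos hx]
    have := hft ⟨x, hx⟩
    simp only [ht, mem_biUnion, mem_filter, mem_univ, true_and, Finset.mem_product,
      Finset.mem_singleton, Finset.mem_range] at this
    obtain ⟨e, hadj, he, _⟩ := this
    rwa [he]
  · intro e
    rw [← Finset.card_range (cap e)]
    have hmaps : ∀ x ∈ S.filter (fun x =>
        (if hx : x ∈ S then (f ⟨x, hx⟩).1 else φ₀ x) = e), x ∈ S := fun x hx =>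
      (Finset.mem_filter.1 hx).1
    apply Finset.card_le_card_of_injOn
      (f := fun x => (if hx : x ∈ S then (f ⟨x, hx⟩).2 else 0))
      (t := Finset.range (cap e))
    · intro x hx
      obtain ⟨hxS, hxe⟩ := Finset.mem_filter.1 hx
      simp only [dif_pos hxS] at hxe ⊢
      have := hft ⟨x, hxS⟩
      simp only [ht, mem_biUnion, mem_filter, mem_univ, true_and, Finset.mem_product,
        Finset.mem_singleton, Finset.mem_range] at this
      obtain ⟨e', _, he', hn⟩ := this
      rw [Finset.mem_coe, Finset.mem_range]
      rw [he'] at hxe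
      rwa [hxe] at hn
    · intro x hx y hy hxy
      obtain ⟨hxS, hxe⟩ := Finset.mem_filter.1 hx
      obtain ⟨hyS, hye⟩ := Finset.mem_filter.1 hy
      simp only [dif_pos hxS, dif_pos hyS] at hxy hxe hye
      have : f ⟨x, hxS⟩ = f ⟨y, hyS⟩ := Prod.ext (hxe.trans hye.symm) hxy
      exact congrArg Subtype.val (hfinj this)

/-- union of tight sets is tight -/
lemma tight_union {I A B : Finset ι} (hI : HallC cap Adj I)
    (hA : A ⊆ I) (hAt : A.card = fcap cap Adj A)
    (hB : B ⊆ I) (hBt : B.card = fcap cap Adj B) :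
    (A ∪ B).card = fcap cap Adj (A ∪ B) := by
  have h1 : (A ∪ B).card ≤ fcap cap Adj (A ∪ B) := hI _ (union_subset hA hB)
  have h2 : (A ∩ B).card ≤ fcap cap Adj (A ∩ B) :=
    hI _ (fun x hx => hA (mem_inter.1 hx).1)
  have h3 := fcap_submodular (cap := cap) (Adj := Adj) A B
  have h4 : (A ∪ B).card + (A ∩ B).card = A.card + B.card :=
    Finset.card_union_add_card_inter A B
  omega

/-- the exchange property, in Hall form -/
lemma hall_exchange {I J : Finset ι} (hI : HallC cap Adj I) (hJ : HallC cap Adj J)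
    (hcard : I.card < J.card) :
    ∃ x ∈ J, x ∉ I ∧ HallC cap Adj (insert x I) := by
  by_contra hcon
  push_neg at hcon
  -- for each x in J \ I, get a tight set A_x ⊆ I with fcap (insert x A_x) = fcap A_x
  have key : ∀ x ∈ J \ I, ∃ A ⊆ I, A.card = fcap cap Adj A ∧
      fcap cap Adj (insert x A) = fcap cap Adj A := by
    intro x hx
    obtain ⟨hxJ, hxI⟩ := mem_sdiff.1 hx
    have := hcon x hxJ hxI
    simp only [HallC, not_forall] at this
    obtain ⟨D, hD, hDc⟩ := this
    push_neg at hDc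
    have hxD : x ∈ D := by
      by_contra hxD
      have : D ⊆ I := fun y hy => by
        rcases mem_insert.1 (hD hy) with rfl | h
        · exact absurd hy hxD
        · exact h
      exact absurd (hI D this) (not_le.2 hDc)
    set A := D.erase x with hAdef
    have hAI : A ⊆ I := by
      intro y hy
      obtain ⟨hyx, hyD⟩ := mem_erase.1 hy
      rcases mem_insert.1 (hD hyD) with rfl | h
      · exact absurd rfl hyx
      · exact h
    have hDins : D = insert x A := by
      rw [hAdef, Finset.insert_erase hxD]
    have hAcard : A.card + 1 = D.card := by
      rw [hDins, Finset.card_insert_of_notMem (Finset.notMem_erase x D)]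
    have h1 : A.card ≤ fcap cap Adj A := hI A hAI
    have h2 : fcap cap Adj A ≤ fcap cap Adj D := fcap_mono (hDins ▸ subset_insert x A)
    have h3 : fcap cap Adj (insert x A) = fcap cap Adj D := by rw [← hDins]
    exact ⟨A, hAI, by omega, by omega⟩
  -- take the union of all these tight sets
  choose! g hg1 hg2 hg3 using key
  set A : Finset ι := (J \ I).sup g with hAdef
  have hAI : A ⊆ I := Finset.sup_le (fun x hx => hg1 x hx)
  have hAt : A.card = fcap cap Adj A := by
    have : ∀ s : Finset ι, s ⊆ J \ I → ((s.sup g).card = fcap cap Adj (s.sup g) ∧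
        s.sup g ⊆ I) := by
      intro s
      induction s using Finset.induction_on with
      | empty =>
        intro _
        refine ⟨?_, by simp⟩
        simp only [Finset.sup_empty, Finset.bot_eq_empty, Finset.card_empty]
        have : nbr Adj (∅ : Finset ι) = ∅ := by
          ext e; simp [nbr]
        rw [fcap, this, Finset.sum_empty]
      | @insert y s hy ih =>
        intro hsub
        have hyJ : y ∈ J \ I := hsub (mem_insert_self y s)
        have hs : s ⊆ J \ I := fun z hz => hsub (mem_insert_of_mem hz)
        obtain ⟨ih1, ih2⟩ := ih hs
        rw [Finset.sup_insert]
        constructor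
        · exact tight_union hI (hg1 y hyJ) (hg2 y hyJ) ih2 ih1
        · exact union_subset (hg1 y hyJ) ih2
    exact (this (J \ I) Subset.rfl).1
  -- fcap (insert x A) = fcap A for all x ∈ J \ I
  have habsorb : ∀ x ∈ J \ I, fcap cap Adj (insert x A) = fcap cap Adj A := by
    intro x hx
    have hxI : x ∉ I := (mem_sdiff.1 hx).2
    have hxA : x ∉ A := fun h => hxI (hAI h)
    have hgA : g x ⊆ A := Finset.le_sup hx
    have hsub := fcap_submodular (cap := cap) (Adj := Adj) A (insert x (g x))
    have he1 : A ∪ insert x (g x) = insert x A := by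
      ext y
      simp only [mem_union, mem_insert]
      constructor
      · rintro (h | h | h)
        · exact Or.inr h
        · exact Or.inl h
        · exact Or.inr (hgA h)
      · rintro (rfl | h)
        · exact Or.inr (Or.inl rfl)
        · exact Or.inl h
    have he2 : A ∩ insert x (g x) = g x := by
      ext y
      simp only [mem_inter, mem_insert]
      constructor
      · rintro ⟨hyA, rfl | h⟩
        · exact absurd hyA hxA
        · exact h
      · exact fun h => ⟨hgA h, Or.inr h⟩
    rw [he1, he2] at hsub
    have h3 := hg3 x hx
    have h4 : fcap cap Adj A ≤ fcap cap Adj (insert x A) := fcap_mono (subset_insert x A)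
    omega
  -- fcap (A ∪ (J \ I)) = fcap A
  have hbig : ∀ s : Finset ι, s ⊆ J \ I → fcap cap Adj (A ∪ s) = fcap cap Adj A := by
    intro s
    induction s using Finset.induction_on with
    | empty => intro _; rw [Finset.union_empty]
    | @insert y s hy ih =>
      intro hsub
      have hyJ : y ∈ J \ I := hsub (mem_insert_self y s)
      have hs : s ⊆ J \ I := fun z hz => hsub (mem_insert_of_mem hz)
      have ihv := ih hs
      have hsub2 := fcap_submodular (cap := cap) (Adj := Adj) (A ∪ s) (insert y A)
      have he1 : (A ∪ s) ∪ insert y A = A ∪ insert y s := by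
        ext z
        simp only [mem_union, mem_insert]
        tauto
      have he2 : (A ∪ s) ∩ insert y A = A := by
        ext z
        simp only [mem_inter, mem_union, mem_insert]
        constructor
        · rintro ⟨hz1 | hz1, rfl | hz2⟩
          · exact hz1
          · exact hz1
          · exact absurd hz1 hy
          · exact hz2
        · exact fun h => ⟨Or.inl h, Or.inr h⟩
      rw [he1, he2] at hsub2
      have h3 := habsorb y hyJ
      have h4 : fcap cap Adj A ≤ fcap cap Adj (A ∪ insert y s) :=
        fcap_mono Finset.subset_union_left
      omega
  -- derive the contradiction
  have hfinal : ((J \ I) ∪ (J ∩ A)).card ≤ fcap cap Adj A := by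
    have h1 : (J \ I) ∪ (J ∩ A) ⊆ J := by
      intro y hy
      rcases mem_union.1 hy with h | h
      · exact (mem_sdiff.1 h).1
      · exact (mem_inter.1 h).1
    have h2 : (J \ I) ∪ (J ∩ A) ⊆ A ∪ (J \ I) := by
      intro y hy
      rcases mem_union.1 hy with h | h
      · exact mem_union_right _ h
      · exact mem_union_left _ (mem_inter.1 h).2
    calc ((J \ I) ∪ (J ∩ A)).card ≤ fcap cap Adj ((J \ I) ∪ (J ∩ A)) := hJ _ h1
      _ ≤ fcap cap Adj (A ∪ (J \ I)) := fcap_mono h2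
      _ = fcap cap Adj A := hbig (J \ I) Subset.rfl
  have hdisj : Disjoint (J \ I) (J ∩ A) := by
    apply Finset.disjoint_left.2
    intro y hy hy'
    exact (mem_sdiff.1 hy).2 (hAI (mem_inter.1 hy').2)
  rw [Finset.card_union_of_disjoint hdisj] at hfinal
  rw [← hAt] at hfinal
  have hAsplit : A.card = (A ∩ J).card + (A \ J).card :=
    (Finset.card_inter_add_card_sdiff A J).symm
  have hAJ : (A ∩ J).card = (J ∩ A).card := by rw [Finset.inter_comm]
  have hAdiffI : (A \ J).card ≤ (I \ J).card :=
    Finset.card_le_card (fun y hy => mem_sdiff.2 ⟨hAI (mem_sdiff.1 hy).1, (mem_sdiff.1 hy).2⟩)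
  have hJsplit : J.card = (J \ I).card + (J ∩ I).card :=
    (Finset.card_sdiff_add_card_inter J I).symm
  have hIsplit : I.card = (I \ J).card + (I ∩ J).card :=
    (Finset.card_sdiff_add_card_inter I J).symm
  have hIJ : (I ∩ J).card = (J ∩ I).card := by rw [Finset.inter_comm]
  omega

/-- iterate the exchange: any Hall set extends to one of size ≥ any other Hall set -/
lemma hall_extend {U : Finset ι} (hU : HallC cap Adj U) :
    ∀ n (S : Finset ι), HallC cap Adj S → U.card ≤ S.card + n →
      ∃ T, S ⊆ T ∧ HallC cap Adj T ∧ U.card ≤ T.card := by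
  intro n
  induction n with
  | zero => exact fun S hS hle => ⟨S, Subset.rfl, hS, by omega⟩
  | succ n ih =>
    intro S hS hle
    by_cases hc : U.card ≤ S.card
    · exact ⟨S, Subset.rfl, hS, hc⟩
    · push_neg at hc
      obtain ⟨x, _, hxS, hx⟩ := hall_exchange hS hU hc
      obtain ⟨T, hT1, hT2, hT3⟩ := ih (insert x S) hx
        (by rw [Finset.card_insert_of_notMem hxS]; omega)
      exact ⟨T, Subset.trans (subset_insert x S) hT1, hT2, hT3⟩

end Aux

/-- Every feasible item set is contained in a feasible item set of maximum
cardinality (i.e. whose cardinality is maximal among all feasible sets). -/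
theorem feasible_subset_maximum_feasible {ι ε : Type*} [Fintype ι] [Fintype ε]
    [DecidableEq ι] [DecidableEq ε]
    (cap : ε → ℕ) (Adj : ι → ε → Prop) (S : Finset ι)
    (hS : Feasible cap Adj S) :
    ∃ T : Finset ι, S ⊆ T ∧ Feasible cap Adj T ∧
      ∀ U : Finset ι, Feasible cap Adj U → U.card ≤ T.card := by
  classical
  obtain ⟨φ₀, -, -⟩ := id hS
  -- pick a maximum-cardinality feasible set U
  have hne : ((univ : Finset (Finset ι)).filter (fun X => Feasible cap Adj X)).Nonempty :=
    ⟨S, Finset.mem_filter.2 ⟨Finset.mem_univ _, hS⟩⟩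
  obtain ⟨U, hUmem, hUmax⟩ := Finset.exists_max_image _ Finset.card hne
  have hUfeas : Feasible cap Adj U := (Finset.mem_filter.1 hUmem).2
  obtain ⟨T, hT1, hT2, hT3⟩ := hall_extend (feasible_hall hUfeas) U.card S
    (feasible_hall hS) (by omega)
  refine ⟨T, hT1, hall_feasible hT2 φ₀, fun V hV => ?_⟩
  have := hUmax V (Finset.mem_filter.2 ⟨Finset.mem_univ _, hV⟩)
  omega
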